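/- arXiv:1912.03261 — 5 statements merged into one kernel-verified Lean document; each statement's English description precedes it below -/
import Mathlib

section
/- Let ξ = (ξ_n)_{n∈ℕ} be any sequence in H. Then: (i) C_ξ = D_ξ* (the Hilbert-space adjoint of the densely defined operator D_ξ), and consequently C_ξ is a closed operator; (ii) if D(C_ξ) is dense in H, then D_ξ ⊆ C_ξ*; (iii) D_ξ is closable if and only if D(C_ξ) is dense in H; (iv) D_ξ is closed if and only if D(C_ξ) is dense in H and D_ξ = C_ξ*; (v) S_ξ = D_ξ C_ξ (equality of unbounded operators, including equality of domains). -/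
noncomputable section
open scoped InnerProductSpace ComplexInnerProductSpace ComplexConjugate ENNReal
open Filter Topology

/- `H` is a separable complex Hilbert space. -/
variable {H : Type} [NormedAddCommGroup H] [InnerProductSpace ℂ H] [CompleteSpace H]
  [TopologicalSpace.SeparableSpace H]

/-- The space `ℓ²(ℕ)` of square-summable complex sequences. -/
abbrev l2 : Type := lp (fun _ : ℕ => ℂ) 2

/-- The domain of the analysis operator `C_ξ`:
`D(C_ξ) = {f ∈ H : Σ_n |⟨f,ξ_n⟩|² < ∞}`.  (The paper's inner product `⟨f,ξ_n⟩`, linear in `f`,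
is `⟪ξ n, f⟫_ℂ` in Mathlib's convention.) -/
def domC (ξ : ℕ → H) : Set H := {f : H | Memℓp (fun n => ⟪ξ n, f⟫_ℂ) 2}

open Classical in
/-- The analysis operator `C_ξ f = (⟨f,ξ_n⟩)_n`, with junk value `0` outside of its domain. -/
def Cfun (ξ : ℕ → H) (f : H) : l2 :=
  if h : Memℓp (fun n => ⟪ξ n, f⟫_ℂ) 2 then ⟨_, h⟩ else 0

/-- The domain of the synthesis operator `D_ξ`:
`D(D_ξ) = {(c_n) ∈ ℓ² : Σ_n c_n ξ_n converges in norm in H}`. -/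
def domD (ξ : ℕ → H) : Set l2 :=
  {c : l2 | ∃ L : H, Tendsto (fun k : ℕ => ∑ n ∈ Finset.range k, c n • ξ n) atTop (𝓝 L)}

/-- The domain of the frame operator `S_ξ`:
`D(S_ξ) = {f ∈ H : Σ_n ⟨f,ξ_n⟩ ξ_n converges in norm in H}`. -/
def domS (ξ : ℕ → H) : Set H :=
  {f : H | ∃ L : H, Tendsto (fun k : ℕ => ∑ n ∈ Finset.range k, ⟪ξ n, f⟫_ℂ • ξ n) atTop (𝓝 L)}

/-- The domain of the generalized frame operator `T_ξ`: those `f ∈ D(C_ξ)` for which there is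
`h` in `H_ξ = closure D(C_ξ)` with `Σ_n ⟨f,ξ_n⟩⟨ξ_n,g⟩ = ⟨h,g⟩` for all `g ∈ D(C_ξ)`. -/
def domT (ξ : ℕ → H) : Set H :=
  {f : H | f ∈ domC ξ ∧ ∃ h ∈ closure (domC ξ), ∀ g ∈ domC ξ,
    ∑' n : ℕ, ⟪ξ n, f⟫_ℂ * ⟪g, ξ n⟫_ℂ = ⟪g, h⟫_ℂ}

/-- The domain of `Q_ξ`: those `(c_n) ∈ ℓ²` whose partial sums `Σ_{n<k} c_n ξ_n`
converge weakly in `H`. -/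
def domQ (ξ : ℕ → H) : Set l2 :=
  {c : l2 | ∃ L : H, ∀ y : H,
    Tendsto (fun k : ℕ => ⟪y, ∑ n ∈ Finset.range k, c n • ξ n⟫_ℂ) atTop (𝓝 ⟪y, L⟫_ℂ)}

/-- The domain of the weak frame operator `W_ξ`: those `f ∈ H` whose partial sums
`Σ_{n<k} ⟨f,ξ_n⟩ ξ_n` converge weakly in `H`. -/
def domW (ξ : ℕ → H) : Set H :=
  {f : H | ∃ L : H, ∀ y : H,
    Tendsto (fun k : ℕ => ⟪y, ∑ n ∈ Finset.range k, ⟪ξ n, f⟫_ℂ • ξ n⟫_ℂ) atTop (𝓝 ⟪y, L⟫_ℂ)}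


/-!
Everything is read off from graphs in `ℓ² × H`. The adjoint relation of the graph of `D_ξ`,
tested against the pairs `(δ_n, ξ_n)`, forces `h_n = ⟨f, ξ_n⟩`; conversely `⟨C_ξ f, c⟩ = ⟨f, D_ξ c⟩`
by passing to the limit in the partial sums. So the adjoint of `D_ξ` is `C_ξ`, which is therefore
closed. The double adjoint of a linear relation is its closure (a double orthogonal complement in
`WithLp 2 (ℓ² × H)`), so the closure of the graph of `D_ξ` is
`{(c, L) : ⟨L, f⟩ = ⟨c, C_ξ f⟩ for all f ∈ D(C_ξ)}`, whose fibre over `c = 0` is `D(C_ξ)ᗮ`;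
this gives (iii) and (iv). For (v): if `Σ ⟨f, ξ_n⟩ ξ_n` converges to `L`, its inner products with `f`,
the partial sums of `Σ |⟨f, ξ_n⟩|²`, converge to `⟨f, L⟩`, so `f ∈ D(C_ξ)`.
-/

namespace Submodule

variable {𝕜 E F : Type*} [RCLike 𝕜] [NormedAddCommGroup E] [InnerProductSpace 𝕜 E]
  [NormedAddCommGroup F] [InnerProductSpace 𝕜 F]

theorem isClosed_adjoint (g : Submodule 𝕜 (E × F)) : IsClosed (g.adjoint : Set (F × E)) := by
  have : (g.adjoint : Set (F × E)) = ⋂ q ∈ g, {x | ⟪q.2, x.1⟫_𝕜 - ⟪q.1, x.2⟫_𝕜 = 0} := by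
    ext x
    simp [mem_adjoint_iff]
  rw [this]
  exact isClosed_biInter fun q _ => isClosed_eq (by fun_prop) continuous_const

theorem mem_adjoint_iff_forall_inner_eq {g : Submodule 𝕜 (E × F)} {D : Set E} {T : E → F}
    (hg : ∀ p, p ∈ g ↔ p.1 ∈ D ∧ T p.1 = p.2) (x : F × E) :
    x ∈ g.adjoint ↔ ∀ a ∈ D, ⟪x.2, a⟫_𝕜 = ⟪x.1, T a⟫_𝕜 := by
  rw [mem_adjoint_iff]
  constructor
  · intro hx a ha
    have := hx a (T a) ((hg (a, T a)).2 ⟨ha, rfl⟩)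
    rw [sub_eq_zero] at this
    rw [← inner_conj_symm, ← this, inner_conj_symm]
  · intro hx a b hab
    obtain ⟨ha, rfl⟩ : a ∈ D ∧ T a = b := (hg (a, b)).1 hab
    rw [sub_eq_zero, ← inner_conj_symm, ← hx a ha, inner_conj_symm]

theorem adjoint_adjoint [CompleteSpace E] [CompleteSpace F] (g : Submodule 𝕜 (E × F)) :
    g.adjoint.adjoint = g.topologicalClosure := by
  let e := WithLp.prodContinuousLinearEquiv 2 𝕜 E F
  let K := g.comap (e : WithLp 2 (E × F) →ₗ[𝕜] E × F)
  -- `g.adjoint` is `gᗮ` in `WithLp 2 (E × F)`, rotated by `(x, y) ↦ (-y, x)`.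
  have hK : ∀ y : WithLp 2 (E × F), y ∈ Kᗮ ↔ (-y.snd, y.fst) ∈ g.adjoint := by
    intro y
    rw [mem_adjoint_iff, mem_orthogonal]
    constructor
    · intro h a b hab
      have := h (WithLp.toLp 2 (a, b)) hab
      rw [WithLp.prod_inner_apply] at this
      simp only [inner_neg_right, WithLp.ofLp_fst, WithLp.ofLp_snd] at this ⊢
      linear_combination -this
    · intro h u hu
      have := h u.fst u.snd hu
      rw [WithLp.prod_inner_apply]
      simp only [inner_neg_right] at this
      simp only [WithLp.ofLp_fst, WithLp.ofLp_snd]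
      linear_combination -this
  have hclosure : ∀ p : E × F, p ∈ g.topologicalClosure ↔ WithLp.toLp 2 p ∈ Kᗮᗮ := by
    intro p
    rw [orthogonal_orthogonal_eq_closure, ← SetLike.mem_coe, ← SetLike.mem_coe,
      topologicalClosure_coe, topologicalClosure_coe]
    show p ∈ closure (g : Set (E × F)) ↔ WithLp.toLp 2 p ∈ closure (e.toHomeomorph ⁻¹' g)
    rw [← e.toHomeomorph.preimage_closure]
    rfl
  ext p
  rw [hclosure, mem_orthogonal, mem_adjoint_iff]
  constructor
  · intro h u hu
    have := h _ _ ((hK u).1 hu)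
    rw [WithLp.prod_inner_apply]
    simp only [inner_neg_left] at this
    simp only [WithLp.ofLp_fst, WithLp.ofLp_snd]
    linear_combination this
  · intro h a b hab
    have := h (WithLp.toLp 2 (b, -a)) ((hK _).2 (by simpa using hab))
    rw [WithLp.prod_inner_apply] at this
    simp only [inner_neg_left] at this ⊢
    linear_combination this

theorem dense_iff_forall_inner_eq_zero [CompleteSpace E] (K : Submodule 𝕜 E) :
    Dense (K : Set E) ↔ ∀ x, (∀ y ∈ K, ⟪x, y⟫_𝕜 = 0) → x = 0 := by
  rw [dense_iff_topologicalClosure_eq_top, topologicalClosure_eq_top_iff]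
  simp only [Submodule.eq_bot_iff, mem_orthogonal']

end Submodule

section FrameOperators

variable {E : Type} [NormedAddCommGroup E] [InnerProductSpace ℂ E] {ξ : ℕ → E}

theorem Cfun_apply {f : E} (hf : f ∈ domC ξ) (n : ℕ) : Cfun ξ f n = ⟪ξ n, f⟫_ℂ := by
  rw [show Cfun ξ f = ⟨_, hf⟩ from dif_pos hf]

theorem mem_domC_and_Cfun_eq {f : E} {h : l2} (hh : ∀ n, h n = ⟪ξ n, f⟫_ℂ) :
    f ∈ domC ξ ∧ Cfun ξ f = h := by
  have hf : f ∈ domC ξ := by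
    show Memℓp _ 2
    rw [← funext hh]
    exact h.2
  exact ⟨hf, lp.ext <| funext fun n => (Cfun_apply hf n).trans (hh n).symm⟩

theorem sum_Cfun_smul {f : E} (hf : f ∈ domC ξ) (k : ℕ) :
    ∑ n ∈ Finset.range k, Cfun ξ f n • ξ n = ∑ n ∈ Finset.range k, ⟪ξ n, f⟫_ℂ • ξ n := by
  simp only [Cfun_apply hf]

theorem Cfun_mem_domD_iff {f : E} (hf : f ∈ domC ξ) : Cfun ξ f ∈ domD ξ ↔ f ∈ domS ξ := by
  simp only [domD, domS, Set.mem_ofPred_eq, sum_Cfun_smul hf]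

variable (ξ) in
def analysisDomain : Submodule ℂ E :=
  (lpSubmodule ℂ (fun _ : ℕ => ℂ) 2).comap (LinearMap.pi fun n => innerₛₗ ℂ (ξ n))

variable (ξ) in
def synthesisGraph : Submodule ℂ (l2 × E) where
  carrier := {p | Tendsto (fun k => ∑ n ∈ Finset.range k, p.1 n • ξ n) atTop (𝓝 p.2)}
  zero_mem' := by simp
  add_mem' hp hq := by simpa [add_smul, Finset.sum_add_distrib] using hp.add hq
  smul_mem' a p hp := by simpa [Finset.smul_sum, mul_smul] using hp.const_smul a

theorem mem_synthesisGraph_iff {p : l2 × E} :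
    p ∈ synthesisGraph ξ ↔ Tendsto (fun k => ∑ n ∈ Finset.range k, p.1 n • ξ n) atTop (𝓝 p.2) :=
  Iff.rfl

theorem mem_synthesisGraph_iff_of_tendsto {Dfun : l2 → E}
    (hD : ∀ c ∈ domD ξ,
      Tendsto (fun k : ℕ => ∑ n ∈ Finset.range k, c n • ξ n) atTop (𝓝 (Dfun c)))
    (p : l2 × E) : p ∈ synthesisGraph ξ ↔ p.1 ∈ domD ξ ∧ Dfun p.1 = p.2 :=
  ⟨fun hp => ⟨⟨p.2, hp⟩, tendsto_nhds_unique (hD _ ⟨p.2, hp⟩) hp⟩,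
    fun ⟨hp, hDp⟩ => by rw [mem_synthesisGraph_iff, ← hDp]; exact hD _ hp⟩

theorem eq_of_mem_synthesisGraph {c : l2} {L L' : E} (h : (c, L) ∈ synthesisGraph ξ)
    (h' : (c, L') ∈ synthesisGraph ξ) : L = L' :=
  tendsto_nhds_unique h h'

theorem single_mem_synthesisGraph (n : ℕ) : (lp.single 2 n 1, ξ n) ∈ synthesisGraph ξ := by
  refine tendsto_atTop_of_eventually_const (i₀ := n + 1) fun k hk => ?_
  rw [Finset.sum_eq_single_of_mem n (Finset.mem_range.2 hk)]
  · rw [lp.single_apply_self, one_smul]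
  · intro m _ hm
    rw [lp.single_apply_ne _ _ _ hm, zero_smul]

theorem inner_Cfun_eq_of_mem_synthesisGraph {f : E} (hf : f ∈ domC ξ) {p : l2 × E}
    (hp : p ∈ synthesisGraph ξ) : ⟪Cfun ξ f, p.1⟫_ℂ = ⟪f, p.2⟫_ℂ := by
  have hsum : ∀ k, ⟪f, ∑ n ∈ Finset.range k, p.1 n • ξ n⟫_ℂ
      = ∑ n ∈ Finset.range k, ⟪Cfun ξ f n, p.1 n⟫_ℂ := fun k => by
    simp only [inner_sum, inner_smul_right, Cfun_apply hf, RCLike.inner_apply, inner_conj_symm,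
      mul_comm]
  refine tendsto_nhds_unique (lp.hasSum_inner _ _).tendsto_sum_nat ?_
  simpa only [hsum] using Tendsto.inner (𝕜 := ℂ) (tendsto_const_nhds (x := f)) hp

theorem mem_adjoint_synthesisGraph_iff (x : E × l2) :
    x ∈ (synthesisGraph ξ).adjoint ↔ x.1 ∈ domC ξ ∧ Cfun ξ x.1 = x.2 := by
  rw [Submodule.mem_adjoint_iff]
  constructor
  · intro hx
    refine mem_domC_and_Cfun_eq fun n => ?_
    have := hx _ _ (single_mem_synthesisGraph n)
    rw [lp.inner_single_left, sub_eq_zero] at this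
    simpa using this.symm
  · rintro ⟨hf, hCf⟩ a b hab
    have := inner_Cfun_eq_of_mem_synthesisGraph hf hab
    rw [← hCf, sub_eq_zero, ← inner_conj_symm, ← this, inner_conj_symm]

theorem isClosed_graph_Cfun : IsClosed {p : E × l2 | p.1 ∈ domC ξ ∧ Cfun ξ p.1 = p.2} := by
  convert (synthesisGraph ξ).isClosed_adjoint
  ext x
  exact (mem_adjoint_synthesisGraph_iff x).symm

theorem mem_closure_synthesisGraph_iff [CompleteSpace E] (p : l2 × E) :
    p ∈ closure (synthesisGraph ξ : Set (l2 × E)) ↔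
      ∀ f ∈ domC ξ, ⟪p.2, f⟫_ℂ = ⟪p.1, Cfun ξ f⟫_ℂ := by
  rw [← Submodule.topologicalClosure_coe, ← Submodule.adjoint_adjoint, SetLike.mem_coe]
  exact Submodule.mem_adjoint_iff_forall_inner_eq mem_adjoint_synthesisGraph_iff p

theorem dense_domC_iff [CompleteSpace E] :
    Dense (domC ξ) ↔ ∀ L : E, (∀ f ∈ domC ξ, ⟪L, f⟫_ℂ = 0) → L = 0 :=
  (analysisDomain ξ).dense_iff_forall_inner_eq_zero

theorem dense_domC_iff_closable [CompleteSpace E] :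
    Dense (domC ξ) ↔ ∀ L : E, ((0 : l2), L) ∈ closure (synthesisGraph ξ : Set (l2 × E)) → L = 0 := by
  rw [dense_domC_iff]
  simp only [mem_closure_synthesisGraph_iff, inner_zero_left]

theorem isClosed_synthesisGraph_iff [CompleteSpace E] :
    IsClosed (synthesisGraph ξ : Set (l2 × E)) ↔ Dense (domC ξ) ∧
      ∀ p, p ∈ synthesisGraph ξ ↔ ∀ f ∈ domC ξ, ⟪p.2, f⟫_ℂ = ⟪p.1, Cfun ξ f⟫_ℂ := by
  simp only [← mem_closure_synthesisGraph_iff, ← SetLike.mem_coe, ← Set.ext_iff,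
    dense_domC_iff_closable]
  constructor
  · intro hclosed
    refine ⟨fun L hL => ?_, hclosed.closure_eq.symm⟩
    rw [hclosed.closure_eq] at hL
    exact eq_of_mem_synthesisGraph hL (zero_mem _)
  · rintro ⟨-, hcl⟩
    rw [hcl]
    exact isClosed_closure

theorem mem_domC_of_mem_domS {f : E} (hf : f ∈ domS ξ) : f ∈ domC ξ := by
  obtain ⟨L, hL⟩ := hf
  have hsum : ∀ k, (⟪f, ∑ n ∈ Finset.range k, ⟪ξ n, f⟫_ℂ • ξ n⟫_ℂ).re
      = ∑ n ∈ Finset.range k, ‖⟪ξ n, f⟫_ℂ‖ ^ 2 := fun k => by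
    rw [inner_sum, Complex.re_sum]
    refine Finset.sum_congr rfl fun n _ => ?_
    rw [inner_smul_right, ← inner_conj_symm f (ξ n), RCLike.mul_conj]
    norm_cast
  have hconv : HasSum (fun n => ‖⟪ξ n, f⟫_ℂ‖ ^ 2) (⟪f, L⟫_ℂ).re :=
    (hasSum_iff_tendsto_nat_of_nonneg (fun n => by positivity) _).2 <| by
      simpa only [Function.comp_def, hsum] using (Complex.continuous_re.tendsto _).comp
        (Tendsto.inner (𝕜 := ℂ) (tendsto_const_nhds (x := f)) hL)
  show Memℓp _ 2
  rw [memℓp_gen_iff (by norm_num)]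
  simpa using hconv.summable

theorem domS_eq : domS ξ = {f | f ∈ domC ξ ∧ Cfun ξ f ∈ domD ξ} := by
  ext f
  exact ⟨fun hf => ⟨mem_domC_of_mem_domS hf, (Cfun_mem_domD_iff (mem_domC_of_mem_domS hf)).2 hf⟩,
    fun ⟨hf, hCf⟩ => (Cfun_mem_domD_iff hf).1 hCf⟩

end FrameOperators

/-- For any sequence `ξ` in `H`, with `Dfun`/`Sfun` the synthesis and frame
operators (characterized on their domains by norm convergence of the partial sums):
(i) `C_ξ = D_ξ*` (the graph of the Hilbert adjoint of `D_ξ` is exactly the graph of `C_ξ`),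
and consequently `C_ξ` is a closed operator; (ii) if `D(C_ξ)` is dense, then `D_ξ ⊆ C_ξ*`;
(iii) `D_ξ` is closable iff `D(C_ξ)` is dense; (iv) `D_ξ` is closed iff `D(C_ξ)` is dense and
`D_ξ = C_ξ*`; (v) `S_ξ = D_ξ C_ξ`, including equality of domains. -/
theorem statement0 (ξ : ℕ → H)
    (Dfun : l2 → H)
    (hD : ∀ c ∈ domD ξ,
      Tendsto (fun k : ℕ => ∑ n ∈ Finset.range k, c n • ξ n) atTop (𝓝 (Dfun c)))
    (Sfun : H → H)
    (hS : ∀ f ∈ domS ξ,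
      Tendsto (fun k : ℕ => ∑ n ∈ Finset.range k, ⟪ξ n, f⟫_ℂ • ξ n) atTop (𝓝 (Sfun f))) :
    -- (i) C_ξ = D_ξ* ...
    (∀ (f : H) (h : l2),
      (∀ c ∈ domD ξ, ⟪h, c⟫_ℂ = ⟪f, Dfun c⟫_ℂ) ↔ (f ∈ domC ξ ∧ Cfun ξ f = h))
    -- ... and consequently C_ξ is closed
    ∧ IsClosed {p : H × l2 | p.1 ∈ domC ξ ∧ Cfun ξ p.1 = p.2}
    -- (ii) if D(C_ξ) is dense then D_ξ ⊆ C_ξ*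
    ∧ (Dense (domC ξ) → ∀ c ∈ domD ξ, ∀ f ∈ domC ξ, ⟪Dfun c, f⟫_ℂ = ⟪c, Cfun ξ f⟫_ℂ)
    -- (iii) D_ξ is closable iff D(C_ξ) is dense
    ∧ ((∀ L : H, ((0 : l2), L) ∈ closure {p : l2 × H | p.1 ∈ domD ξ ∧ Dfun p.1 = p.2} → L = 0)
        ↔ Dense (domC ξ))
    -- (iv) D_ξ is closed iff D(C_ξ) is dense and D_ξ = C_ξ*
    ∧ (IsClosed {p : l2 × H | p.1 ∈ domD ξ ∧ Dfun p.1 = p.2}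
        ↔ (Dense (domC ξ) ∧ ∀ (c : l2) (L : H),
            (c ∈ domD ξ ∧ Dfun c = L) ↔ (∀ f ∈ domC ξ, ⟪L, f⟫_ℂ = ⟪c, Cfun ξ f⟫_ℂ)))
    -- (v) S_ξ = D_ξ C_ξ, equality of domains included
    ∧ (domS ξ = {f : H | f ∈ domC ξ ∧ Cfun ξ f ∈ domD ξ}
        ∧ ∀ f ∈ domS ξ, Sfun f = Dfun (Cfun ξ f)) := by
  have hG : ∀ p, p ∈ synthesisGraph ξ ↔ p.1 ∈ domD ξ ∧ Dfun p.1 = p.2 :=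
    mem_synthesisGraph_iff_of_tendsto hD
  have hgraph : {p : l2 × H | p.1 ∈ domD ξ ∧ Dfun p.1 = p.2} = synthesisGraph ξ :=
    Set.ext fun p => (hG p).symm
  have hadj (f : H) (h : l2) :
      (∀ c ∈ domD ξ, ⟪h, c⟫_ℂ = ⟪f, Dfun c⟫_ℂ) ↔ f ∈ domC ξ ∧ Cfun ξ f = h := by
    rw [← Submodule.mem_adjoint_iff_forall_inner_eq hG (f, h), mem_adjoint_synthesisGraph_iff]
  refine ⟨hadj, isClosed_graph_Cfun, ?_, ?_, ?_, domS_eq, ?_⟩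
  · intro _ c hc f hf
    rw [← inner_conj_symm, ← (hadj f _).2 ⟨hf, rfl⟩ c hc, inner_conj_symm]
  · rw [hgraph, dense_domC_iff_closable]
  · rw [hgraph, isClosed_synthesisGraph_iff]
    simp only [Prod.forall, hG]
  · intro f hf
    have hS' : (Cfun ξ f, Sfun f) ∈ synthesisGraph ξ := by
      simpa only [mem_synthesisGraph_iff, sum_Cfun_smul (mem_domC_of_mem_domS hf)] using hS f hf
    exact eq_of_mem_synthesisGraph hS' ((hG _).2 ⟨⟨_, hS'⟩, rfl⟩)
end
end

section
/- Let ξ = (ξ_n)_{n∈ℕ} be a lower semi-frame of H. Then the sequence (T_ξ^{-1}Pξ_n)_{n∈ℕ} is a Bessel sequence of H (indeed Σ_{n∈ℕ} |⟨f, T_ξ^{-1}Pξ_n⟩|² ≤ ∥T_ξ^{-1/2}∥²∥f∥² for all f ∈ H), and for every g ∈ D(C_ξ) one has the reconstruction formula g = Σ_{n∈ℕ} ⟨g,ξ_n⟩ T_ξ^{-1}Pξ_n, the series converging unconditionally in the norm of H. -/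
noncomputable section
open scoped InnerProductSpace ComplexInnerProductSpace ComplexConjugate ENNReal
open Filter Topology

/- `H` is a separable complex Hilbert space. -/
variable {H : Type} [NormedAddCommGroup H] [InnerProductSpace ℂ H] [CompleteSpace H]
  [TopologicalSpace.SeparableSpace H]

/-!
The inverse `T_ξ⁻¹` of the generalized frame operator is symmetric on `H_ξ`, and
`⟨T_ξ u, u⟩ = Σ_n |⟨u, ξ_n⟩|²`; applied to `u = T_ξ⁻¹ h` the lower frame bound `A` gives
`A Σ_n |⟨T_ξ⁻¹ h, ξ_n⟩|² ≤ ‖h‖²`. Symmetry and `P = P*` give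
`⟨f, T_ξ⁻¹ P ξ_n⟩ = ⟨T_ξ⁻¹ P f, ξ_n⟩`, so `(T_ξ⁻¹ P ξ_n)_n` is Bessel with bound `A⁻¹`.
A Bessel sequence synthesizes every `ℓ²` sequence of coefficients into a convergent series, and
testing the series against `f` identifies its sum:
`Σ_n ⟨g, ξ_n⟩ ⟨T_ξ⁻¹ P ξ_n, f⟩ = ⟨g, T_ξ T_ξ⁻¹ P f⟩ = ⟨g, P f⟩ = ⟨g, f⟩`.
-/

section

variable {E : Type} [NormedAddCommGroup E] [InnerProductSpace ℂ E]

lemma coe_nnnorm_sq_eq_ofReal {F : Type*} [SeminormedAddCommGroup F] (x : F) :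
    (‖x‖₊ : ℝ≥0∞) ^ 2 = ENNReal.ofReal (‖x‖ ^ 2) := by
  rw [ENNReal.ofReal_pow (norm_nonneg _), ofReal_norm, enorm_eq_nnnorm]

lemma tsum_coe_nnnorm_sq_eq_ofReal {ι F : Type*} [SeminormedAddCommGroup F] {x : ι → F}
    (hx : Summable fun n => ‖x n‖ ^ 2) :
    ∑' n, (‖x n‖₊ : ℝ≥0∞) ^ 2 = ENNReal.ofReal (∑' n, ‖x n‖ ^ 2) := by
  simp_rw [coe_nnnorm_sq_eq_ofReal]
  exact (ENNReal.ofReal_tsum_of_nonneg (fun n => sq_nonneg _) hx).symm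

lemma tsum_coe_nnnorm_sq_le_ofReal {ι F : Type*} [SeminormedAddCommGroup F] {x : ι → F} {b : ℝ}
    (h : ∀ s : Finset ι, ∑ n ∈ s, ‖x n‖ ^ 2 ≤ b) :
    ∑' n, (‖x n‖₊ : ℝ≥0∞) ^ 2 ≤ ENNReal.ofReal b :=
  ENNReal.summable.tsum_le_of_sum_le fun s => by
    simp_rw [coe_nnnorm_sq_eq_ofReal]
    rw [← ENNReal.ofReal_sum_of_nonneg fun n _ => sq_nonneg _]
    exact ENNReal.ofReal_le_ofReal (h s)

lemma norm_sum_smul_sq_le_of_bessel {ι : Type*} {η : ι → E} {B : ℝ} (hB : 0 ≤ B)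
    (hη : ∀ (f : E) (s : Finset ι), ∑ n ∈ s, ‖⟪η n, f⟫_ℂ‖ ^ 2 ≤ B * ‖f‖ ^ 2)
    (c : ι → ℂ) (t : Finset ι) :
    ‖∑ n ∈ t, c n • η n‖ ^ 2 ≤ B * ∑ n ∈ t, ‖c n‖ ^ 2 := by
  set v := ∑ n ∈ t, c n • η n
  have hv : ‖v‖ ^ 2 ≤ ∑ n ∈ t, ‖c n‖ * ‖⟪η n, v⟫_ℂ‖ :=
    calc ‖v‖ ^ 2 = ‖⟪v, v⟫_ℂ‖ := by simp [inner_self_eq_norm_sq_to_K]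
      _ = ‖∑ n ∈ t, conj (c n) * ⟪η n, v⟫_ℂ‖ := by simp only [v, sum_inner, inner_smul_left]
      _ ≤ ∑ n ∈ t, ‖c n‖ * ‖⟪η n, v⟫_ℂ‖ := by
        simpa only [norm_mul, Complex.norm_conj] using
          norm_sum_le t fun n => conj (c n) * ⟪η n, v⟫_ℂ
  have hv4 : (‖v‖ ^ 2) ^ 2 ≤ (B * ∑ n ∈ t, ‖c n‖ ^ 2) * ‖v‖ ^ 2 :=
    calc (‖v‖ ^ 2) ^ 2 ≤ (∑ n ∈ t, ‖c n‖ ^ 2) * ∑ n ∈ t, ‖⟪η n, v⟫_ℂ‖ ^ 2 :=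
          (pow_le_pow_left₀ (sq_nonneg _) hv 2).trans (Finset.sum_mul_sq_le_sq_mul_sq _ _ _)
      _ ≤ (∑ n ∈ t, ‖c n‖ ^ 2) * (B * ‖v‖ ^ 2) := by gcongr; exact hη v t
      _ = (B * ∑ n ∈ t, ‖c n‖ ^ 2) * ‖v‖ ^ 2 := by ring
  have hBc : 0 ≤ B * ∑ n ∈ t, ‖c n‖ ^ 2 := by positivity
  nlinarith [sq_nonneg ‖v‖]

lemma summable_smul_of_bessel [CompleteSpace E] {ι : Type*} {η : ι → E} {B : ℝ} (hB : 0 ≤ B)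
    (hη : ∀ (f : E) (s : Finset ι), ∑ n ∈ s, ‖⟪η n, f⟫_ℂ‖ ^ 2 ≤ B * ‖f‖ ^ 2)
    {c : ι → ℂ} (hc : Summable fun n => ‖c n‖ ^ 2) :
    Summable fun n => c n • η n := by
  refine summable_iff_vanishing_norm.mpr fun ε hε => ?_
  obtain ⟨s, hs⟩ := summable_iff_vanishing_norm.mp hc (ε ^ 2 / (B + 1)) (by positivity)
  refine ⟨s, fun t ht => lt_of_pow_lt_pow_left₀ 2 hε.le ?_⟩
  have htail : ∑ n ∈ t, ‖c n‖ ^ 2 < ε ^ 2 / (B + 1) := (le_abs_self _).trans_lt (hs t ht)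
  calc ‖∑ n ∈ t, c n • η n‖ ^ 2 ≤ B * ∑ n ∈ t, ‖c n‖ ^ 2 := norm_sum_smul_sq_le_of_bessel hB hη c t
    _ ≤ B * (ε ^ 2 / (B + 1)) := by gcongr
    _ < ε ^ 2 := by
      rw [mul_div_assoc', div_lt_iff₀ (by positivity)]
      nlinarith [pow_pos hε 2]

lemma summable_norm_inner_sq_of_mem_domC {ξ : ℕ → E} {f : E} (hf : f ∈ domC ξ) :
    Summable fun n => ‖⟪ξ n, f⟫_ℂ‖ ^ 2 := by
  simpa using hf.summable (by norm_num)

lemma conj_tsum_inner_mul_inner {ι : Type*} (ξ : ι → E) (x y : E) :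
    conj (∑' n, ⟪ξ n, x⟫_ℂ * ⟪y, ξ n⟫_ℂ) = ∑' n, ⟪ξ n, y⟫_ℂ * ⟪x, ξ n⟫_ℂ := by
  simp only [Complex.conj_tsum, map_mul, inner_conj_symm, mul_comm]

def IsOrthProjOnto (K : Set E) (P : E → E) : Prop :=
  ∀ x, P x ∈ K ∧ ∀ z ∈ K, ⟪z, x - P x⟫_ℂ = 0

namespace IsOrthProjOnto

variable {K : Set E} {P : E → E}

lemma inner_apply_right (hP : IsOrthProjOnto K P) {z : E} (hz : z ∈ K) (x : E) :
    ⟪z, P x⟫_ℂ = ⟪z, x⟫_ℂ := by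
  have h := (hP x).2 z hz
  rw [inner_sub_right, sub_eq_zero] at h
  exact h.symm

lemma inner_apply_left (hP : IsOrthProjOnto K P) {z : E} (hz : z ∈ K) (x : E) :
    ⟪P x, z⟫_ℂ = ⟪x, z⟫_ℂ := by
  rw [← inner_conj_symm, hP.inner_apply_right hz, inner_conj_symm]

lemma norm_apply_le (hP : IsOrthProjOnto K P) (x : E) : ‖P x‖ ≤ ‖x‖ := by
  have h : ‖P x‖ ^ 2 ≤ ‖P x‖ * ‖x‖ :=
    calc ‖P x‖ ^ 2 = RCLike.re ⟪P x, P x⟫_ℂ := (inner_self_eq_norm_sq _).symm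
      _ = RCLike.re ⟪P x, x⟫_ℂ := by rw [hP.inner_apply_right (hP x).1]
      _ ≤ ‖P x‖ * ‖x‖ := (RCLike.re_le_norm _).trans (norm_inner_le_norm _ _)
  nlinarith [norm_nonneg (P x), norm_nonneg x]

end IsOrthProjOnto

/-- `T_ξ (Tinv h) = h` for `h ∈ H_ξ`, written through the form defining `T_ξ`; the identity
itself witnesses `Tinv h ∈ D(T_ξ)`. -/
def IsFrameOpRightInverse (ξ : ℕ → E) (Tinv : E → E) : Prop :=
  ∀ h ∈ closure (domC ξ), Tinv h ∈ domC ξ ∧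
    ∀ g ∈ domC ξ, ∑' n, ⟪ξ n, Tinv h⟫_ℂ * ⟪g, ξ n⟫_ℂ = ⟪g, h⟫_ℂ

namespace IsFrameOpRightInverse

variable {ξ : ℕ → E} {Tinv P : E → E}

lemma inner_comm (hT : IsFrameOpRightInverse ξ Tinv) {a b : E} (ha : a ∈ closure (domC ξ))
    (hb : b ∈ closure (domC ξ)) : ⟪Tinv a, b⟫_ℂ = ⟪a, Tinv b⟫_ℂ := by
  rw [← (hT b hb).2 _ (hT a ha).1, ← conj_tsum_inner_mul_inner ξ (Tinv a) (Tinv b),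
    (hT a ha).2 _ (hT b hb).1, inner_conj_symm]

lemma ofReal_tsum_norm_inner_sq (hT : IsFrameOpRightInverse ξ Tinv) {h : E}
    (hh : h ∈ closure (domC ξ)) :
    ((∑' n, ‖⟪ξ n, Tinv h⟫_ℂ‖ ^ 2 : ℝ) : ℂ) = ⟪Tinv h, h⟫_ℂ := by
  rw [← (hT h hh).2 _ (hT h hh).1, Complex.ofReal_tsum]
  refine tsum_congr fun n => ?_
  rw [← inner_conj_symm (Tinv h) (ξ n), Complex.mul_conj, Complex.normSq_eq_norm_sq]

lemma mul_tsum_norm_inner_sq_le (hT : IsFrameOpRightInverse ξ Tinv) {A : ℝ}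
    (hlow : ∀ f ∈ domC ξ, A * ‖f‖ ^ 2 ≤ ∑' n, ‖⟪ξ n, f⟫_ℂ‖ ^ 2) {h : E}
    (hh : h ∈ closure (domC ξ)) :
    A * ∑' n, ‖⟪ξ n, Tinv h⟫_ℂ‖ ^ 2 ≤ ‖h‖ ^ 2 := by
  set S := ∑' n, ‖⟪ξ n, Tinv h⟫_ℂ‖ ^ 2
  have hS : S ≤ ‖Tinv h‖ * ‖h‖ :=
    calc S = RCLike.re ⟪Tinv h, h⟫_ℂ := by
          rw [← hT.ofReal_tsum_norm_inner_sq hh]; rfl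
      _ ≤ ‖Tinv h‖ * ‖h‖ := (RCLike.re_le_norm _).trans (norm_inner_le_norm _ _)
  have hAS : A * ‖Tinv h‖ ^ 2 ≤ S := hlow _ (hT h hh).1
  have hS0 : 0 ≤ S := tsum_nonneg fun n => sq_nonneg _
  rcases le_or_gt A 0 with hA | hA
  · nlinarith [sq_nonneg ‖h‖]
  nlinarith [norm_nonneg (Tinv h), norm_nonneg h, sq_nonneg (‖h‖ - A * ‖Tinv h‖)]

lemma inner_apply_proj_eq (hT : IsFrameOpRightInverse ξ Tinv)
    (hP : IsOrthProjOnto (closure (domC ξ)) P) (x f : E) :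
    ⟪Tinv (P x), f⟫_ℂ = ⟪x, Tinv (P f)⟫_ℂ := by
  have hPx := (hP x).1
  have hPf := (hP f).1
  calc ⟪Tinv (P x), f⟫_ℂ = ⟪Tinv (P x), P f⟫_ℂ :=
        (hP.inner_apply_right (subset_closure (hT _ hPx).1) f).symm
    _ = ⟪P x, Tinv (P f)⟫_ℂ := hT.inner_comm hPx hPf
    _ = ⟪x, Tinv (P f)⟫_ℂ := hP.inner_apply_left (subset_closure (hT _ hPf).1) x

lemma sum_norm_inner_sq_le (hT : IsFrameOpRightInverse ξ Tinv)
    (hP : IsOrthProjOnto (closure (domC ξ)) P) {A : ℝ} (hA : 0 < A)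
    (hlow : ∀ f ∈ domC ξ, A * ‖f‖ ^ 2 ≤ ∑' n, ‖⟪ξ n, f⟫_ℂ‖ ^ 2) (f : E) (s : Finset ℕ) :
    ∑ n ∈ s, ‖⟪Tinv (P (ξ n)), f⟫_ℂ‖ ^ 2 ≤ A⁻¹ * ‖f‖ ^ 2 := by
  have hPf := (hP f).1
  simp only [hT.inner_apply_proj_eq hP]
  rw [le_inv_mul_iff₀ hA]
  calc A * ∑ n ∈ s, ‖⟪ξ n, Tinv (P f)⟫_ℂ‖ ^ 2 ≤ A * ∑' n, ‖⟪ξ n, Tinv (P f)⟫_ℂ‖ ^ 2 := by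
        gcongr
        exact (summable_norm_inner_sq_of_mem_domC (hT _ hPf).1).sum_le_tsum s
          fun n _ => sq_nonneg _
    _ ≤ ‖P f‖ ^ 2 := hT.mul_tsum_norm_inner_sq_le hlow hPf
    _ ≤ ‖f‖ ^ 2 := by gcongr; exact hP.norm_apply_le f

lemma hasSum_inner_smul [CompleteSpace E] (hT : IsFrameOpRightInverse ξ Tinv)
    (hP : IsOrthProjOnto (closure (domC ξ)) P) {A : ℝ} (hA : 0 < A)
    (hlow : ∀ f ∈ domC ξ, A * ‖f‖ ^ 2 ≤ ∑' n, ‖⟪ξ n, f⟫_ℂ‖ ^ 2) {g : E} (hg : g ∈ domC ξ) :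
    HasSum (fun n => ⟪ξ n, g⟫_ℂ • Tinv (P (ξ n))) g := by
  obtain ⟨L, hL⟩ := summable_smul_of_bessel (inv_nonneg.2 hA.le)
    (hT.sum_norm_inner_sq_le hP hA hlow) (summable_norm_inner_sq_of_mem_domC hg)
  convert hL
  refine ext_inner_left ℂ fun f => ?_
  have hPf := (hP f).1
  calc ⟪f, g⟫_ℂ = conj ⟪g, P f⟫_ℂ := by
        rw [inner_conj_symm, hP.inner_apply_left (subset_closure hg)]
    _ = ∑' n, ⟪ξ n, g⟫_ℂ * ⟪Tinv (P f), ξ n⟫_ℂ := by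
        rw [← (hT _ hPf).2 g hg, conj_tsum_inner_mul_inner]
    _ = ∑' n, ⟪ξ n, g⟫_ℂ * ⟪f, Tinv (P (ξ n))⟫_ℂ := by
        refine tsum_congr fun n => congrArg _ ?_
        rw [← inner_conj_symm, ← hT.inner_apply_proj_eq hP, inner_conj_symm]
    _ = ⟪f, L⟫_ℂ := by
        simpa only [innerSL_apply_apply, inner_smul_right] using (hL.mapL (innerSL ℂ f)).tsum_eq

end IsFrameOpRightInverse

end

/-- Let `ξ` be a lower semi-frame of `H`.  Let `P` be the orthogonal
projection of `H` onto `H_ξ = closure D(C_ξ)` and let `Tinv` be the (bounded) inverse of the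
generalized frame operator `T_ξ`, characterized by `Tinv h ∈ D(T_ξ)` and `T_ξ (Tinv h) = h`
for `h ∈ H_ξ` (the latter expressed through the sesquilinear form).  Then
`(T_ξ⁻¹ P ξ_n)_n` is a Bessel sequence of `H`, and for every `g ∈ D(C_ξ)` one has
`g = Σ_n ⟨g,ξ_n⟩ T_ξ⁻¹ P ξ_n` with unconditional norm convergence (`HasSum`). -/
theorem statement2 (ξ : ℕ → H) (A : ℝ) (hA : 0 < A)
    (hlow : ∀ f : H, ENNReal.ofReal (A * ‖f‖ ^ 2) ≤ ∑' n : ℕ, ((‖⟪ξ n, f⟫_ℂ‖₊ : ℝ≥0∞) ^ 2))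
    (P : H → H)
    (hP : ∀ x : H, P x ∈ closure (domC ξ) ∧ ∀ z ∈ closure (domC ξ), ⟪z, x - P x⟫_ℂ = 0)
    (Tinv : H → H)
    (hTinv : ∀ h ∈ closure (domC ξ), Tinv h ∈ domT ξ ∧
      ∀ g ∈ domC ξ, ∑' n : ℕ, ⟪ξ n, Tinv h⟫_ℂ * ⟪g, ξ n⟫_ℂ = ⟪g, h⟫_ℂ) :
    (∃ B > (0 : ℝ), ∀ f : H,
        ∑' n : ℕ, ((‖⟪Tinv (P (ξ n)), f⟫_ℂ‖₊ : ℝ≥0∞) ^ 2) ≤ ENNReal.ofReal (B * ‖f‖ ^ 2))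
    ∧ ∀ g ∈ domC ξ, HasSum (fun n : ℕ => ⟪ξ n, g⟫_ℂ • Tinv (P (ξ n))) g := by
  have hT : IsFrameOpRightInverse ξ Tinv := fun h hh => ⟨(hTinv h hh).1.1, (hTinv h hh).2⟩
  have hlow' : ∀ f ∈ domC ξ, A * ‖f‖ ^ 2 ≤ ∑' n, ‖⟪ξ n, f⟫_ℂ‖ ^ 2 := fun f hf => by
    have h := hlow f
    rwa [tsum_coe_nnnorm_sq_eq_ofReal (summable_norm_inner_sq_of_mem_domC hf),
      ENNReal.ofReal_le_ofReal_iff (tsum_nonneg fun n => sq_nonneg _)] at h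
  exact ⟨⟨A⁻¹, inv_pos.2 hA, fun f =>
      tsum_coe_nnnorm_sq_le_ofReal (hT.sum_norm_inner_sq_le hP hA hlow' f)⟩,
    fun g hg => hT.hasSum_inner_smul hP hA hlow' hg⟩
end
end

section
/- Let ξ = (ξ_n)_{n∈ℕ} be a sequence in H. Then: (i) Q_ξ is densely defined, D_ξ ⊆ Q_ξ, and Q_ξ* = C_ξ; (ii) if D(C_ξ) is dense in H, then Q_ξ ⊆ C_ξ*; (iii) Q_ξ is closable if and only if D(C_ξ) is dense in H; (iv) Q_ξ is closed if and only if D(C_ξ) is dense in H and C_ξ* = Q_ξ; (v) S_ξ ⊆ W_ξ and W_ξ = Q_ξ C_ξ (equality of operators, including domains). -/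
noncomputable section
open scoped InnerProductSpace ComplexInnerProductSpace ComplexConjugate ENNReal
open Filter Topology

/- `H` is a separable complex Hilbert space. -/
variable {H : Type} [NormedAddCommGroup H] [InnerProductSpace ℂ H] [CompleteSpace H]
  [TopologicalSpace.SeparableSpace H]

/-!
Pairing the partial sums of `Σ cₙ ξₙ` with `f ∈ D(C_ξ)` gives `⟨C_ξ f, c⟩ = ⟨f, Q_ξ c⟩`, and
testing an adjoint pair `(f, h)` of `Q_ξ` on the unit vectors `eₘ`, for which `Q_ξ eₘ = ξₘ`, forces
`hₘ = ⟨f, ξₘ⟩`; hence `Q_ξ* = C_ξ`. In the Hilbert space `ℓ² ⊕ H` the closure of the graph of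
`Q_ξ` is its double orthogonal complement, i.e. the graph of `C_ξ*`; this gives (ii)–(iv), since
`(0, L)` lies in that graph exactly when `L ⊥ D(C_ξ)`. For (v), testing the weak convergence of
`Σ ⟨f, ξₙ⟩ ξₙ` against `f` itself shows `Σ |⟨f, ξₙ⟩|² < ∞`, after which these are the partial sums
defining `Q_ξ (C_ξ f)`.
-/

section WeakConvergence

variable {𝕜 E F : Type*} [RCLike 𝕜] [NormedAddCommGroup E] [InnerProductSpace 𝕜 E]
  [NormedAddCommGroup F] [InnerProductSpace 𝕜 F]

theorem inner_eq_inner_iff_swap {a b : E} {c d : F} :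
    ⟪a, b⟫_𝕜 = ⟪c, d⟫_𝕜 ↔ ⟪b, a⟫_𝕜 = ⟪d, c⟫_𝕜 := by
  rw [← inner_conj_symm a, ← inner_conj_symm c, (starRingEnd 𝕜).injective.eq_iff]

variable (𝕜) in
def WeakTendsto (u : ℕ → E) (x : E) : Prop :=
  ∀ y : E, Tendsto (fun k => ⟪y, u k⟫_𝕜) atTop (𝓝 ⟪y, x⟫_𝕜)

variable {u v : ℕ → E} {x x' : E}

theorem WeakTendsto.unique (h : WeakTendsto 𝕜 u x) (h' : WeakTendsto 𝕜 u x') : x = x' :=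
  ext_inner_left 𝕜 fun y => tendsto_nhds_unique (h y) (h' y)

theorem Filter.Tendsto.weakTendsto (h : Tendsto u atTop (𝓝 x)) : WeakTendsto 𝕜 u x :=
  fun _ => tendsto_const_nhds.inner h

theorem WeakTendsto.add (hu : WeakTendsto 𝕜 u x) (hv : WeakTendsto 𝕜 v x') :
    WeakTendsto 𝕜 (u + v) (x + x') := fun y => by
  simpa only [Pi.add_apply, inner_add_right] using (hu y).add (hv y)

theorem WeakTendsto.const_smul (hu : WeakTendsto 𝕜 u x) (a : 𝕜) :
    WeakTendsto 𝕜 (a • u) (a • x) := fun y => by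
  simpa only [Pi.smul_apply, inner_smul_right] using (hu y).const_mul a

theorem WeakTendsto.congr (hu : WeakTendsto 𝕜 u x) (h : ∀ k, u k = v k) : WeakTendsto 𝕜 v x :=
  funext h ▸ hu

end WeakConvergence

section HilbertSpace

variable {𝕜 E F : Type*} [RCLike 𝕜] [NormedAddCommGroup E] [InnerProductSpace 𝕜 E]
  [CompleteSpace E] [NormedAddCommGroup F] [InnerProductSpace 𝕜 F] [CompleteSpace F]

theorem Submodule.dense_iff_forall_inner_eq_zero_s6 (K : Submodule 𝕜 E) :
    Dense (K : Set E) ↔ ∀ x : E, (∀ y ∈ K, ⟪x, y⟫_𝕜 = 0) → x = 0 := by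
  rw [Submodule.dense_iff_topologicalClosure_eq_top, Submodule.topologicalClosure_eq_top_iff,
    Submodule.eq_bot_iff]
  simp only [Submodule.mem_orthogonal']

/-- Through `WithLp 2 (E × F)` the closure of `g` is its double orthogonal complement, and the
orthogonal complement of `g` corresponds to `g.adjoint` under `(a, b) ↦ (b, -a)`. -/
theorem Submodule.closure_eq_adjoint_adjoint (g : Submodule 𝕜 (E × F)) :
    closure (g : Set (E × F)) = g.adjoint.adjoint := by
  let e := WithLp.prodContinuousLinearEquiv 2 𝕜 E F
  let G : Submodule 𝕜 (WithLp 2 (E × F)) := g.comap (e : WithLp 2 (E × F) →ₗ[𝕜] E × F)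
  have hG : ∀ v, v ∈ Gᗮ ↔ (v.ofLp.2, -v.ofLp.1) ∈ g.adjoint := by
    intro v
    rw [Submodule.mem_orthogonal, Submodule.mem_adjoint_iff]
    constructor
    · intro h a b hab
      have := h (WithLp.toLp 2 (a, b)) hab
      rw [WithLp.prod_inner_apply] at this
      simp only [inner_neg_right]
      linear_combination this
    · intro h u hu
      have := h u.ofLp.1 u.ofLp.2 hu
      rw [WithLp.prod_inner_apply]
      simp only [inner_neg_right] at this
      linear_combination this
  ext p
  have hcl : p ∈ closure (g : Set (E × F)) ↔ WithLp.toLp 2 p ∈ Gᗮᗮ := by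
    rw [Submodule.orthogonal_orthogonal_eq_closure, ← SetLike.mem_coe,
      Submodule.topologicalClosure_coe, Submodule.comap_coe]
    exact Set.ext_iff.1 (e.preimage_closure g) (WithLp.toLp 2 p)
  rw [hcl, Submodule.mem_orthogonal, SetLike.mem_coe, Submodule.mem_adjoint_iff]
  constructor
  · intro h a b hab
    have := h (WithLp.toLp 2 (-b, a)) ((hG _).2 (by simpa using hab))
    rw [WithLp.prod_inner_apply, inner_neg_left] at this
    linear_combination -this
  · intro h u hu
    have := h _ _ ((hG u).1 hu)
    rw [inner_neg_left] at this
    rw [WithLp.prod_inner_apply]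
    linear_combination -this

end HilbertSpace

section Sequence

variable {E : Type} [NormedAddCommGroup E] [InnerProductSpace ℂ E] {ξ : ℕ → E}

/-- `Q` agrees with `Q_ξ` on `D(Q_ξ)`; its values elsewhere are irrelevant. -/
def IsWeakSynthesisOperator (ξ : ℕ → E) (Q : l2 → E) : Prop :=
  ∀ c ∈ domQ ξ, WeakTendsto ℂ (fun k => ∑ n ∈ Finset.range k, c n • ξ n) (Q c)

def IsWeakFrameOperator (ξ : ℕ → E) (W : E → E) : Prop :=
  ∀ f ∈ domW ξ, WeakTendsto ℂ (fun k => ∑ n ∈ Finset.range k, ⟪ξ n, f⟫_ℂ • ξ n) (W f)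

theorem weakTendsto_synthesis_add {c c' : l2} {x x' : E}
    (hc : WeakTendsto ℂ (fun k => ∑ n ∈ Finset.range k, c n • ξ n) x)
    (hc' : WeakTendsto ℂ (fun k => ∑ n ∈ Finset.range k, c' n • ξ n) x') :
    WeakTendsto ℂ (fun k => ∑ n ∈ Finset.range k, (c + c') n • ξ n) (x + x') :=
  (hc.add hc').congr fun k => by simp [add_smul, Finset.sum_add_distrib]

theorem weakTendsto_synthesis_smul {c : l2} {x : E}
    (hc : WeakTendsto ℂ (fun k => ∑ n ∈ Finset.range k, c n • ξ n) x) (a : ℂ) :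
    WeakTendsto ℂ (fun k => ∑ n ∈ Finset.range k, (a • c) n • ξ n) (a • x) :=
  (hc.const_smul a).congr fun k => by simp [smul_smul, Finset.smul_sum]

theorem weakTendsto_synthesis_single (m : ℕ) :
    WeakTendsto ℂ (fun k => ∑ n ∈ Finset.range k, (lp.single 2 m (1 : ℂ) : l2) n • ξ n) (ξ m) := by
  refine Tendsto.weakTendsto (tendsto_const_nhds.congr' ?_)
  filter_upwards [eventually_gt_atTop m] with k hk
  simp [lp.single_apply, Pi.single_apply, hk]

def domQSubmodule (ξ : ℕ → E) : Submodule ℂ l2 where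
  carrier := domQ ξ
  add_mem' := fun ⟨x, hx⟩ ⟨x', hx'⟩ => ⟨x + x', weakTendsto_synthesis_add hx hx'⟩
  zero_mem' := ⟨0, fun y => by simp⟩
  smul_mem' a := fun ⟨x, hx⟩ => ⟨a • x, weakTendsto_synthesis_smul hx a⟩

theorem dense_domQ : Dense (domQ ξ) := by
  let b : HilbertBasis ℕ ℂ l2 := HilbertBasis.ofRepr (LinearIsometryEquiv.refl ℂ l2)
  have hb : Submodule.span ℂ (Set.range b) ≤ domQSubmodule ξ := by
    rw [Submodule.span_le]
    rintro _ ⟨m, rfl⟩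
    rw [← b.repr_symm_single]
    exact ⟨ξ m, weakTendsto_synthesis_single m⟩
  exact Submodule.dense_iff_topologicalClosure_eq_top.2
    (top_unique (b.dense_span.ge.trans (Submodule.topologicalClosure_mono hb)))

def domCSubmodule (ξ : ℕ → E) : Submodule ℂ E where
  carrier := domC ξ
  add_mem' {f g} hf hg := by
    show Memℓp (fun n => ⟪ξ n, f + g⟫_ℂ) 2
    simp only [inner_add_right]
    exact hf.add hg
  zero_mem' := by
    show Memℓp (fun n => ⟪ξ n, 0⟫_ℂ) 2
    simp only [inner_zero_right]
    exact zero_memℓp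
  smul_mem' a f hf := by
    show Memℓp (fun n => ⟪ξ n, a • f⟫_ℂ) 2
    simp only [inner_smul_right]
    exact hf.const_smul a

namespace IsWeakSynthesisOperator

variable {Q : l2 → E}

theorem eq_of_weakTendsto (hQ : IsWeakSynthesisOperator ξ Q) {c : l2} {x : E}
    (h : WeakTendsto ℂ (fun k => ∑ n ∈ Finset.range k, c n • ξ n) x) : Q c = x :=
  (hQ c ⟨x, h⟩).unique h

theorem map_add (hQ : IsWeakSynthesisOperator ξ Q) {c c' : l2} (hc : c ∈ domQ ξ)
    (hc' : c' ∈ domQ ξ) : Q (c + c') = Q c + Q c' :=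
  hQ.eq_of_weakTendsto (weakTendsto_synthesis_add (hQ c hc) (hQ c' hc'))

theorem map_smul (hQ : IsWeakSynthesisOperator ξ Q) {c : l2} (hc : c ∈ domQ ξ) (a : ℂ) :
    Q (a • c) = a • Q c :=
  hQ.eq_of_weakTendsto (weakTendsto_synthesis_smul (hQ c hc) a)

theorem map_zero (hQ : IsWeakSynthesisOperator ξ Q) : Q 0 = 0 := by
  simpa using hQ.map_smul (domQSubmodule ξ).zero_mem 0

def graph (hQ : IsWeakSynthesisOperator ξ Q) : Submodule ℂ (l2 × E) where
  carrier := {p | p.1 ∈ domQ ξ ∧ Q p.1 = p.2}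
  add_mem' := by
    rintro ⟨c, _⟩ ⟨c', _⟩ ⟨hc, rfl : Q c = _⟩ ⟨hc', rfl : Q c' = _⟩
    exact ⟨(domQSubmodule ξ).add_mem hc hc', hQ.map_add hc hc'⟩
  zero_mem' := ⟨(domQSubmodule ξ).zero_mem, hQ.map_zero⟩
  smul_mem' := by
    rintro a ⟨c, _⟩ ⟨hc, rfl : Q c = _⟩
    exact ⟨(domQSubmodule ξ).smul_mem a hc, hQ.map_smul hc a⟩

theorem inner_Cfun_eq_inner_apply (hQ : IsWeakSynthesisOperator ξ Q) {f : E} (hf : f ∈ domC ξ)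
    {c : l2} (hc : c ∈ domQ ξ) : ⟪Cfun ξ f, c⟫_ℂ = ⟪f, Q c⟫_ℂ := by
  refine tendsto_nhds_unique (lp.hasSum_inner (Cfun ξ f) c).tendsto_sum_nat
    ((hQ c hc f).congr fun k => ?_)
  simp [inner_sum, inner_smul_right, Cfun_apply hf, mul_comm]

theorem forall_inner_eq_inner_iff (hQ : IsWeakSynthesisOperator ξ Q) (f : E) (h : l2) :
    (∀ c ∈ domQ ξ, ⟪h, c⟫_ℂ = ⟪f, Q c⟫_ℂ) ↔ f ∈ domC ξ ∧ Cfun ξ f = h := by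
  refine ⟨fun hfh => ?_, fun ⟨hf, hfh⟩ c hc => hfh ▸ hQ.inner_Cfun_eq_inner_apply hf hc⟩
  have hcoord : ∀ m, h m = ⟪ξ m, f⟫_ℂ := fun m => by
    have hm := hfh _ ⟨ξ m, weakTendsto_synthesis_single m⟩
    rw [hQ.eq_of_weakTendsto (weakTendsto_synthesis_single m), lp.inner_single_right,
      inner_eq_inner_iff_swap] at hm
    simpa using hm
  have hf : Memℓp (fun n => ⟪ξ n, f⟫_ℂ) 2 := funext hcoord ▸ h.prop
  exact ⟨hf, lp.ext (funext fun n => (Cfun_apply hf n).trans (hcoord n).symm)⟩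

theorem mem_adjoint_graph (hQ : IsWeakSynthesisOperator ξ Q) (p : E × l2) :
    p ∈ hQ.graph.adjoint ↔ p.1 ∈ domC ξ ∧ Cfun ξ p.1 = p.2 := by
  rw [Submodule.mem_adjoint_iff, ← hQ.forall_inner_eq_inner_iff]
  constructor
  · intro h c hc
    exact (inner_eq_inner_iff_swap.1 (sub_eq_zero.1 (h c (Q c) ⟨hc, rfl⟩))).symm
  · rintro h c _ ⟨hc, rfl : Q c = _⟩
    exact sub_eq_zero.2 (inner_eq_inner_iff_swap.1 (h c hc).symm)

variable [CompleteSpace E]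

theorem closure_graph (hQ : IsWeakSynthesisOperator ξ Q) :
    closure {p : l2 × E | p.1 ∈ domQ ξ ∧ Q p.1 = p.2}
      = {p | ∀ f ∈ domC ξ, ⟪p.2, f⟫_ℂ = ⟪p.1, Cfun ξ f⟫_ℂ} := by
  change closure (hQ.graph : Set (l2 × E)) = _
  ext p
  rw [Submodule.closure_eq_adjoint_adjoint, SetLike.mem_coe, Submodule.mem_adjoint_iff]
  constructor
  · intro h f hf
    have hfC : (f, Cfun ξ f) ∈ hQ.graph.adjoint := (hQ.mem_adjoint_graph _).2 ⟨hf, rfl⟩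
    exact inner_eq_inner_iff_swap.1 (sub_eq_zero.1 (h f _ hfC)).symm
  · intro h f x hfx
    obtain ⟨hf, rfl : Cfun ξ f = x⟩ := (hQ.mem_adjoint_graph (f, x)).1 hfx
    exact sub_eq_zero.2 (inner_eq_inner_iff_swap.1 (h f hf).symm)

theorem closable_iff (hQ : IsWeakSynthesisOperator ξ Q) :
    (∀ L : E, ((0 : l2), L) ∈ closure {p : l2 × E | p.1 ∈ domQ ξ ∧ Q p.1 = p.2} → L = 0)
      ↔ Dense (domC ξ) := by
  rw [hQ.closure_graph, show domC ξ = domCSubmodule ξ from rfl,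
    Submodule.dense_iff_forall_inner_eq_zero_s6]
  simp only [Set.mem_ofPred_eq, inner_zero_left]
  rfl

theorem isClosed_graph_iff (hQ : IsWeakSynthesisOperator ξ Q) :
    IsClosed {p : l2 × E | p.1 ∈ domQ ξ ∧ Q p.1 = p.2}
      ↔ Dense (domC ξ) ∧ ∀ (c : l2) (L : E),
          (∀ f ∈ domC ξ, ⟪L, f⟫_ℂ = ⟪c, Cfun ξ f⟫_ℂ) ↔ (c ∈ domQ ξ ∧ Q c = L) := by
  have hclosed : IsClosed {p : l2 × E | p.1 ∈ domQ ξ ∧ Q p.1 = p.2} ↔ ∀ (c : l2) (L : E),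
      (∀ f ∈ domC ξ, ⟪L, f⟫_ℂ = ⟪c, Cfun ξ f⟫_ℂ) ↔ (c ∈ domQ ξ ∧ Q c = L) := by
    rw [← closure_eq_iff_isClosed, hQ.closure_graph, Set.ext_iff, Prod.forall]
    rfl
  rw [hclosed]
  refine ⟨fun h => ⟨hQ.closable_iff.1 fun L hL => ?_, h⟩, And.right⟩
  rw [hQ.closure_graph] at hL
  exact ((h 0 L).1 hL).2.symm.trans hQ.map_zero

end IsWeakSynthesisOperator

theorem domW_subset_domC : domW ξ ⊆ domC ξ := by
  rintro f ⟨L, hL⟩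
  have hpartial : ∀ k, ⟪f, ∑ n ∈ Finset.range k, ⟪ξ n, f⟫_ℂ • ξ n⟫_ℂ
      = ((∑ n ∈ Finset.range k, ‖⟪ξ n, f⟫_ℂ‖ ^ 2 : ℝ) : ℂ) := fun k => by
    rw [inner_sum, Complex.ofReal_sum]
    refine Finset.sum_congr rfl fun n _ => ?_
    rw [inner_smul_right, ← inner_conj_symm f, RCLike.mul_conj]
    push_cast
    rfl
  have hsum : Summable fun n => ‖⟪ξ n, f⟫_ℂ‖ ^ 2 :=
    ((hasSum_iff_tendsto_nat_of_nonneg (fun _ => sq_nonneg _) _).2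
      (((Complex.continuous_re.tendsto _).comp (hL f)).congr fun k => by
        rw [Function.comp_apply, hpartial, Complex.ofReal_re])).summable
  refine memℓp_gen ?_
  simpa using hsum

theorem mem_domW_iff {f : E} : f ∈ domW ξ ↔ f ∈ domC ξ ∧ Cfun ξ f ∈ domQ ξ := by
  constructor
  · intro hf
    have hfC := domW_subset_domC hf
    obtain ⟨x, hx⟩ := hf
    exact ⟨hfC, x, WeakTendsto.congr hx fun k => (sum_Cfun_smul hfC k).symm⟩
  · rintro ⟨hf, x, hx⟩
    exact ⟨x, WeakTendsto.congr hx (sum_Cfun_smul hf)⟩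

theorem IsWeakFrameOperator.eq_comp_Cfun {W : E → E} {Q : l2 → E} (hW : IsWeakFrameOperator ξ W)
    (hQ : IsWeakSynthesisOperator ξ Q) {f : E} (hf : f ∈ domW ξ) : W f = Q (Cfun ξ f) := by
  have hfC := domW_subset_domC hf
  exact ((hW f hf).congr fun k => (sum_Cfun_smul hfC k).symm).unique
    (hQ _ (mem_domW_iff.1 hf).2)

end Sequence

/-- For any sequence `ξ` in `H`, with `Dfun`, `Sfun`, `Qfun`, `Wfun` the
synthesis, frame, weak synthesis and weak frame operators (each pinned down on its domain):
(i) `Q_ξ` is densely defined, `D_ξ ⊆ Q_ξ` and `Q_ξ* = C_ξ`;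
(ii) if `D(C_ξ)` is dense then `Q_ξ ⊆ C_ξ*`;
(iii) `Q_ξ` is closable iff `D(C_ξ)` is dense;
(iv) `Q_ξ` is closed iff `D(C_ξ)` is dense and `C_ξ* = Q_ξ`;
(v) `S_ξ ⊆ W_ξ` and `W_ξ = Q_ξ C_ξ` (equality of domains included). -/
theorem statement6 (ξ : ℕ → H)
    (Dfun : l2 → H)
    (hD : ∀ c ∈ domD ξ,
      Tendsto (fun k : ℕ => ∑ n ∈ Finset.range k, c n • ξ n) atTop (𝓝 (Dfun c)))
    (Sfun : H → H)
    (hS : ∀ f ∈ domS ξ,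
      Tendsto (fun k : ℕ => ∑ n ∈ Finset.range k, ⟪ξ n, f⟫_ℂ • ξ n) atTop (𝓝 (Sfun f)))
    (Qfun : l2 → H)
    (hQ : ∀ c ∈ domQ ξ, ∀ y : H,
      Tendsto (fun k : ℕ => ⟪y, ∑ n ∈ Finset.range k, c n • ξ n⟫_ℂ) atTop (𝓝 ⟪y, Qfun c⟫_ℂ))
    (Wfun : H → H)
    (hW : ∀ f ∈ domW ξ, ∀ y : H,
      Tendsto (fun k : ℕ => ⟪y, ∑ n ∈ Finset.range k, ⟪ξ n, f⟫_ℂ • ξ n⟫_ℂ) atTop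
        (𝓝 ⟪y, Wfun f⟫_ℂ)) :
    -- (i) Q_ξ densely defined, D_ξ ⊆ Q_ξ, Q_ξ* = C_ξ
    (Dense (domQ ξ)
      ∧ (domD ξ ⊆ domQ ξ ∧ ∀ c ∈ domD ξ, Qfun c = Dfun c)
      ∧ ∀ (f : H) (h : l2),
          (∀ c ∈ domQ ξ, ⟪h, c⟫_ℂ = ⟪f, Qfun c⟫_ℂ) ↔ (f ∈ domC ξ ∧ Cfun ξ f = h))
    -- (ii)
    ∧ (Dense (domC ξ) → ∀ c ∈ domQ ξ, ∀ f ∈ domC ξ, ⟪Qfun c, f⟫_ℂ = ⟪c, Cfun ξ f⟫_ℂ)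
    -- (iii)
    ∧ ((∀ L : H, ((0 : l2), L) ∈ closure {p : l2 × H | p.1 ∈ domQ ξ ∧ Qfun p.1 = p.2} → L = 0)
        ↔ Dense (domC ξ))
    -- (iv)
    ∧ (IsClosed {p : l2 × H | p.1 ∈ domQ ξ ∧ Qfun p.1 = p.2}
        ↔ (Dense (domC ξ) ∧ ∀ (c : l2) (L : H),
            (∀ f ∈ domC ξ, ⟪L, f⟫_ℂ = ⟪c, Cfun ξ f⟫_ℂ) ↔ (c ∈ domQ ξ ∧ Qfun c = L)))
    -- (v) S_ξ ⊆ W_ξ and W_ξ = Q_ξ C_ξ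
    ∧ ((domS ξ ⊆ domW ξ ∧ ∀ f ∈ domS ξ, Wfun f = Sfun f)
        ∧ (domW ξ = {f : H | f ∈ domC ξ ∧ Cfun ξ f ∈ domQ ξ}
            ∧ ∀ f ∈ domW ξ, Wfun f = Qfun (Cfun ξ f))) := by
  have hQ : IsWeakSynthesisOperator ξ Qfun := hQ
  have hW : IsWeakFrameOperator ξ Wfun := hW
  refine ⟨⟨dense_domQ, ⟨fun c hc => ⟨Dfun c, (hD c hc).weakTendsto⟩,
      fun c hc => hQ.eq_of_weakTendsto (hD c hc).weakTendsto⟩, hQ.forall_inner_eq_inner_iff⟩,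
    fun _ c hc f hf => inner_eq_inner_iff_swap.1 (hQ.inner_Cfun_eq_inner_apply hf hc).symm,
    hQ.closable_iff, hQ.isClosed_graph_iff,
    ⟨fun f hf => ⟨Sfun f, (hS f hf).weakTendsto⟩,
      fun f hf => (hW f ⟨Sfun f, (hS f hf).weakTendsto⟩).unique (hS f hf).weakTendsto⟩,
    Set.ext fun f => mem_domW_iff, fun f hf => hW.eq_comp_Cfun hQ hf⟩
end
end

section
/- Let ξ = (ξ_n)_{n∈ℕ} be a sequence in H. The following are equivalent: (1) ξ is a Bessel sequence; (2) D(Q_ξ) = ℓ²(ℕ); (3) D(W_ξ) = H. Moreover, in this case Q_ξ = D_ξ and W_ξ = S_ξ. -/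
noncomputable section
open scoped InnerProductSpace ComplexInnerProductSpace ComplexConjugate ENNReal
open Filter Topology

/- `H` is a separable complex Hilbert space. -/
variable {H : Type} [NormedAddCommGroup H] [InnerProductSpace ℂ H] [CompleteSpace H]
  [TopologicalSpace.SeparableSpace H]

/-! A Bessel bound gives, by Cauchy–Schwarz, `‖∑_{n∈s} cₙ ξₙ‖² ≤ B ∑_{n∈s} |cₙ|²`, so `∑ cₙ ξₙ`
converges in norm for every `c ∈ ℓ²`, and in particular for `cₙ = ⟨f, ξₙ⟩`; a norm limit is also
the weak limit. Conversely, weakly convergent sequences are bounded, so if all the partial sums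
converge weakly, the truncated synthesis operators `T_k c = ∑_{n<k} cₙ ξₙ` (resp. truncated frame
operators `U_k f = ∑_{n<k} ⟨f, ξₙ⟩ ξₙ`) are pointwise bounded, hence uniformly bounded by
Banach–Steinhaus. Since `∑_{n<k} |⟨f, ξₙ⟩|² = ⟨U_k f, f⟩ ≤ ‖f‖ ‖U_k f‖` and `U_k f = T_k (C_k f)`
with `‖C_k f‖² = ∑_{n<k} |⟨f, ξₙ⟩|²`, a uniform bound on either family is a Bessel bound. -/

open Finset

section Bessel

variable {E : Type*} [NormedAddCommGroup E] [InnerProductSpace ℂ E]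

theorem le_of_sq_le_mul {a b : ℝ} (ha : 0 ≤ a) (hb : 0 ≤ b) (h : a ^ 2 ≤ b * a) : a ≤ b := by
  rcases ha.eq_or_lt with rfl | ha
  · exact hb
  · exact le_of_mul_le_mul_right (by rwa [sq] at h) ha

theorem tsum_nnnorm_sq_le_ofReal_iff {F : Type*} [SeminormedAddGroup F] (x : ℕ → F) {C : ℝ}
    (hC : 0 ≤ C) :
    ∑' n, ((‖x n‖₊ : ℝ≥0∞) ^ 2) ≤ ENNReal.ofReal C ↔ ∀ k, ∑ n ∈ range k, ‖x n‖ ^ 2 ≤ C := by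
  have hsum : ∀ k, ∑ n ∈ range k, ((‖x n‖₊ : ℝ≥0∞) ^ 2)
      = ENNReal.ofReal (∑ n ∈ range k, ‖x n‖ ^ 2) := fun k => by
    rw [ENNReal.ofReal_sum_of_nonneg fun _ _ => by positivity]
    simp [ENNReal.ofReal_pow, ofReal_norm, enorm_eq_nnnorm]
  simp_rw [ENNReal.tsum_eq_iSup_nat, iSup_le_iff, hsum, ENNReal.ofReal_le_ofReal_iff hC]

theorem summable_norm_sq_of_l2 (c : l2) : Summable fun n => ‖c n‖ ^ 2 := by
  simpa using (lp.memℓp c).summable (by norm_num)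

variable {ξ : ℕ → E} {B : ℝ}

theorem sum_norm_inner_sq_le_of_bessel (hB : 0 ≤ B)
    (hξ : ∀ f, ∑' n, ((‖⟪ξ n, f⟫_ℂ‖₊ : ℝ≥0∞) ^ 2) ≤ ENNReal.ofReal (B * ‖f‖ ^ 2))
    (f : E) (s : Finset ℕ) : ∑ n ∈ s, ‖⟪ξ n, f⟫_ℂ‖ ^ 2 ≤ B * ‖f‖ ^ 2 := by
  obtain ⟨k, hk⟩ := s.exists_nat_subset_range
  exact (sum_le_sum_of_subset_of_nonneg hk fun _ _ _ => by positivity).trans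
    ((tsum_nnnorm_sq_le_ofReal_iff _ (by positivity)).1 (hξ f) k)

theorem exists_bessel_of_sum_range_le {M : ℝ}
    (h : ∀ f k, ∑ n ∈ range k, ‖⟪ξ n, f⟫_ℂ‖ ^ 2 ≤ M * ‖f‖ ^ 2) :
    ∃ B > (0 : ℝ), ∀ f, ∑' n, ((‖⟪ξ n, f⟫_ℂ‖₊ : ℝ≥0∞) ^ 2) ≤ ENNReal.ofReal (B * ‖f‖ ^ 2) :=
  ⟨max M 1, by positivity, fun f => (tsum_nnnorm_sq_le_ofReal_iff _ (by positivity)).2 fun k =>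
    (h f k).trans (by gcongr; exact le_max_left M 1)⟩

section SumBound

variable (hB : 0 ≤ B) (hξ : ∀ f (s : Finset ℕ), ∑ n ∈ s, ‖⟪ξ n, f⟫_ℂ‖ ^ 2 ≤ B * ‖f‖ ^ 2)
include hB hξ

theorem norm_sum_smul_sq_le (c : ℕ → ℂ) (s : Finset ℕ) :
    ‖∑ n ∈ s, c n • ξ n‖ ^ 2 ≤ B * ∑ n ∈ s, ‖c n‖ ^ 2 := by
  obtain ⟨v, hv⟩ : ∃ v, v = ∑ n ∈ s, c n • ξ n := ⟨_, rfl⟩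
  rw [← hv]
  have hvv : ‖v‖ ^ 2 ≤ ∑ n ∈ s, ‖c n‖ * ‖⟪ξ n, v⟫_ℂ‖ := calc
    ‖v‖ ^ 2 = ‖⟪v, ∑ n ∈ s, c n • ξ n⟫_ℂ‖ := by rw [← hv, inner_self_eq_norm_sq_to_K]; simp
    _ = ‖∑ n ∈ s, c n * ⟪v, ξ n⟫_ℂ‖ := by simp only [inner_sum, inner_smul_right]
    _ ≤ ∑ n ∈ s, ‖c n * ⟪v, ξ n⟫_ℂ‖ := norm_sum_le _ _
    _ = ∑ n ∈ s, ‖c n‖ * ‖⟪ξ n, v⟫_ℂ‖ := by simp only [norm_mul, norm_inner_symm]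
  refine le_of_sq_le_mul (by positivity) (by positivity) ?_
  calc (‖v‖ ^ 2) ^ 2 ≤ (∑ n ∈ s, ‖c n‖ * ‖⟪ξ n, v⟫_ℂ‖) ^ 2 := by gcongr
    _ ≤ (∑ n ∈ s, ‖c n‖ ^ 2) * ∑ n ∈ s, ‖⟪ξ n, v⟫_ℂ‖ ^ 2 := sum_mul_sq_le_sq_mul_sq _ _ _
    _ ≤ (∑ n ∈ s, ‖c n‖ ^ 2) * (B * ‖v‖ ^ 2) := by gcongr; exact hξ v s
    _ = B * (∑ n ∈ s, ‖c n‖ ^ 2) * ‖v‖ ^ 2 := by ring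

theorem summable_smul_of_bessel_s7 [CompleteSpace E] {c : ℕ → ℂ}
    (hc : Summable fun n => ‖c n‖ ^ 2) : Summable fun n => c n • ξ n := by
  refine summable_iff_vanishing_norm.2 fun ε hε => ?_
  obtain ⟨s, hs⟩ := summable_iff_vanishing_norm.1 hc (ε ^ 2 / (B + 1)) (by positivity)
  refine ⟨s, fun t ht => lt_of_pow_lt_pow_left₀ 2 hε.le ?_⟩
  have hct := hs t ht
  rw [Real.norm_of_nonneg (by positivity)] at hct
  calc ‖∑ n ∈ t, c n • ξ n‖ ^ 2 ≤ B * ∑ n ∈ t, ‖c n‖ ^ 2 := norm_sum_smul_sq_le hB hξ c t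
    _ ≤ (B + 1) * ∑ n ∈ t, ‖c n‖ ^ 2 := by gcongr; linarith
    _ < (B + 1) * (ε ^ 2 / (B + 1)) := by gcongr
    _ = ε ^ 2 := by field_simp

end SumBound

end Bessel

section UniformBoundedness

variable {E : Type*} [NormedAddCommGroup E] [InnerProductSpace ℂ E]

theorem exists_norm_le_of_tendsto_inner [CompleteSpace E] {x : ℕ → E} {L : E}
    (h : ∀ y, Tendsto (fun k => ⟪y, x k⟫_ℂ) atTop (𝓝 ⟪y, L⟫_ℂ)) : ∃ C, ∀ k, ‖x k‖ ≤ C := by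
  obtain ⟨C, hC⟩ := banach_steinhaus (g := fun k => innerSL ℂ (x k)) fun y => by
    obtain ⟨C, hC⟩ := (h y).norm.bddAbove_range
    exact ⟨C, fun k => by simpa [norm_inner_symm] using hC ⟨k, rfl⟩⟩
  exact ⟨C, fun k => by simpa [innerSL_apply_norm] using hC k⟩

theorem exists_opNorm_le_of_tendsto_inner {X : Type*} [NormedAddCommGroup X] [NormedSpace ℂ X]
    [CompleteSpace X] [CompleteSpace E] {T : ℕ → X →L[ℂ] E}
    (h : ∀ x, ∃ L, ∀ y, Tendsto (fun k => ⟪y, T k x⟫_ℂ) atTop (𝓝 ⟪y, L⟫_ℂ)) :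
    ∃ M, ∀ k, ‖T k‖ ≤ M :=
  banach_steinhaus fun x => (h x).elim fun _ hL => exists_norm_le_of_tendsto_inner hL

def partialSynthesis (ξ : ℕ → E) (k : ℕ) : l2 →L[ℂ] E :=
  ∑ n ∈ range k, (lp.evalCLM ℂ (fun _ : ℕ => ℂ) 2 n).smulRight (ξ n)

theorem partialSynthesis_apply (ξ : ℕ → E) (k : ℕ) (c : l2) :
    partialSynthesis ξ k c = ∑ n ∈ range k, c n • ξ n := by
  simp [partialSynthesis, lp.evalCLM]

def partialFrameOp (ξ : ℕ → E) (k : ℕ) : E →L[ℂ] E :=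
  ∑ n ∈ range k, (innerSL ℂ (ξ n)).smulRight (ξ n)

theorem partialFrameOp_apply (ξ : ℕ → E) (k : ℕ) (f : E) :
    partialFrameOp ξ k f = ∑ n ∈ range k, ⟪ξ n, f⟫_ℂ • ξ n := by
  simp [partialFrameOp]

theorem sum_range_norm_inner_sq_le (ξ : ℕ → E) (f : E) (k : ℕ) :
    ∑ n ∈ range k, ‖⟪ξ n, f⟫_ℂ‖ ^ 2 ≤ ‖f‖ * ‖∑ n ∈ range k, ⟪ξ n, f⟫_ℂ • ξ n‖ := by
  have hinner : ⟪f, ∑ n ∈ range k, ⟪ξ n, f⟫_ℂ • ξ n⟫_ℂ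
      = ((∑ n ∈ range k, ‖⟪ξ n, f⟫_ℂ‖ ^ 2 : ℝ) : ℂ) := by
    rw [inner_sum]
    push_cast
    refine sum_congr rfl fun n _ => ?_
    rw [inner_smul_right, ← inner_conj_symm f (ξ n), RCLike.mul_conj]
    rfl
  calc ∑ n ∈ range k, ‖⟪ξ n, f⟫_ℂ‖ ^ 2 = ‖⟪f, ∑ n ∈ range k, ⟪ξ n, f⟫_ℂ • ξ n⟫_ℂ‖ := by
        rw [hinner, Complex.norm_real, Real.norm_of_nonneg (by positivity)]
    _ ≤ ‖f‖ * ‖∑ n ∈ range k, ⟪ξ n, f⟫_ℂ • ξ n‖ := norm_inner_le_norm _ _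

variable {ξ : ℕ → E} {M : ℝ}

theorem sum_range_norm_inner_sq_le_of_norm_partialFrameOp_le
    (hM : ∀ k, ‖partialFrameOp ξ k‖ ≤ M) (f : E) (k : ℕ) :
    ∑ n ∈ range k, ‖⟪ξ n, f⟫_ℂ‖ ^ 2 ≤ M * ‖f‖ ^ 2 := calc
  _ ≤ ‖f‖ * ‖partialFrameOp ξ k f‖ := by
      rw [partialFrameOp_apply]; exact sum_range_norm_inner_sq_le ξ f k
  _ ≤ ‖f‖ * (M * ‖f‖) := by gcongr; exact (partialFrameOp ξ k).le_of_opNorm_le (hM k) f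
  _ = M * ‖f‖ ^ 2 := by ring

theorem sum_range_norm_inner_sq_le_of_norm_partialSynthesis_le
    (hM : ∀ k, ‖partialSynthesis ξ k‖ ≤ M) (f : E) (k : ℕ) :
    ∑ n ∈ range k, ‖⟪ξ n, f⟫_ℂ‖ ^ 2 ≤ M ^ 2 * ‖f‖ ^ 2 := by
  set S := ∑ n ∈ range k, ‖⟪ξ n, f⟫_ℂ‖ ^ 2
  let c : l2 := ∑ n ∈ range k, lp.single 2 n ⟪ξ n, f⟫_ℂ
  have hc : ‖c‖ ^ 2 = S := by
    simpa using lp.norm_sum_single (p := 2) (by norm_num) (fun n => ⟪ξ n, f⟫_ℂ) (range k)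
  have hTc : partialSynthesis ξ k c = ∑ n ∈ range k, ⟪ξ n, f⟫_ℂ • ξ n := by
    rw [partialSynthesis_apply]
    refine sum_congr rfl fun n hn => ?_
    simp only [c, lp.coeFn_sum]
    rw [Finset.sum_apply]
    simp [lp.single_apply, Pi.single_apply, hn]
  have hS : S ≤ ‖f‖ * (M * ‖c‖) := by
    refine (sum_range_norm_inner_sq_le ξ f k).trans ?_
    rw [← hTc]
    gcongr
    exact (partialSynthesis ξ k).le_of_opNorm_le (hM k) c
  refine le_of_sq_le_mul (by positivity) (by positivity) ?_
  calc S ^ 2 ≤ (‖f‖ * (M * ‖c‖)) ^ 2 := by gcongr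
    _ = M ^ 2 * ‖f‖ ^ 2 * S := by rw [← hc]; ring

end UniformBoundedness

section Domains

variable {E : Type} [NormedAddCommGroup E] [InnerProductSpace ℂ E]

theorem domD_subset_domQ (ξ : ℕ → E) : domD ξ ⊆ domQ ξ :=
  fun _ ⟨L, hL⟩ => ⟨L, fun _ => tendsto_const_nhds.inner hL⟩

theorem domS_subset_domW (ξ : ℕ → E) : domS ξ ⊆ domW ξ :=
  fun _ ⟨L, hL⟩ => ⟨L, fun _ => tendsto_const_nhds.inner hL⟩

theorem eq_of_tendsto_inner_of_tendsto {x : ℕ → E} {a b : E}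
    (hweak : ∀ y, Tendsto (fun k => ⟪y, x k⟫_ℂ) atTop (𝓝 ⟪y, a⟫_ℂ))
    (hnorm : Tendsto x atTop (𝓝 b)) : a = b :=
  ext_inner_left ℂ fun y => tendsto_nhds_unique (hweak y) (tendsto_const_nhds.inner hnorm)

variable [CompleteSpace E] {ξ : ℕ → E}

section BesselBound

variable {B : ℝ} (hB : 0 ≤ B) (hξ : ∀ f (s : Finset ℕ), ∑ n ∈ s, ‖⟪ξ n, f⟫_ℂ‖ ^ 2 ≤ B * ‖f‖ ^ 2)
include hB hξ

theorem domD_eq_univ_of_bessel : domD ξ = Set.univ :=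
  Set.eq_univ_of_forall fun c =>
    ⟨_, (summable_smul_of_bessel_s7 hB hξ (summable_norm_sq_of_l2 c)).hasSum.tendsto_sum_nat⟩

theorem domS_eq_univ_of_bessel : domS ξ = Set.univ :=
  Set.eq_univ_of_forall fun f =>
    have hf : Summable fun n => ‖⟪ξ n, f⟫_ℂ‖ ^ 2 :=
      summable_of_sum_range_le (fun _ => by positivity) fun k => hξ f (range k)
    ⟨_, (summable_smul_of_bessel_s7 hB hξ hf).hasSum.tendsto_sum_nat⟩

end BesselBound

theorem bessel_of_domQ_eq_univ (h : domQ ξ = Set.univ) :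
    ∃ B > (0 : ℝ), ∀ f, ∑' n, ((‖⟪ξ n, f⟫_ℂ‖₊ : ℝ≥0∞) ^ 2) ≤ ENNReal.ofReal (B * ‖f‖ ^ 2) := by
  obtain ⟨M, hM⟩ := exists_opNorm_le_of_tendsto_inner (T := partialSynthesis ξ) fun c => by
    obtain ⟨L, hL⟩ : c ∈ domQ ξ := h ▸ Set.mem_univ c
    exact ⟨L, by simpa only [partialSynthesis_apply] using hL⟩
  exact exists_bessel_of_sum_range_le (sum_range_norm_inner_sq_le_of_norm_partialSynthesis_le hM)

theorem bessel_of_domW_eq_univ (h : domW ξ = Set.univ) :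
    ∃ B > (0 : ℝ), ∀ f, ∑' n, ((‖⟪ξ n, f⟫_ℂ‖₊ : ℝ≥0∞) ^ 2) ≤ ENNReal.ofReal (B * ‖f‖ ^ 2) := by
  obtain ⟨M, hM⟩ := exists_opNorm_le_of_tendsto_inner (T := partialFrameOp ξ) fun f => by
    obtain ⟨L, hL⟩ : f ∈ domW ξ := h ▸ Set.mem_univ f
    exact ⟨L, by simpa only [partialFrameOp_apply] using hL⟩
  exact exists_bessel_of_sum_range_le (sum_range_norm_inner_sq_le_of_norm_partialFrameOp_le hM)

end Domains

/-- For a sequence `ξ` in `H` the following are equivalent: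
(1) `ξ` is a Bessel sequence; (2) `D(Q_ξ) = ℓ²(ℕ)`; (3) `D(W_ξ) = H`.
Moreover, in this case `Q_ξ = D_ξ` and `W_ξ = S_ξ` (equality of domains included). -/
theorem statement7 (ξ : ℕ → H)
    (Dfun : l2 → H)
    (hD : ∀ c ∈ domD ξ,
      Tendsto (fun k : ℕ => ∑ n ∈ Finset.range k, c n • ξ n) atTop (𝓝 (Dfun c)))
    (Sfun : H → H)
    (hS : ∀ f ∈ domS ξ,
      Tendsto (fun k : ℕ => ∑ n ∈ Finset.range k, ⟪ξ n, f⟫_ℂ • ξ n) atTop (𝓝 (Sfun f)))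
    (Qfun : l2 → H)
    (hQ : ∀ c ∈ domQ ξ, ∀ y : H,
      Tendsto (fun k : ℕ => ⟪y, ∑ n ∈ Finset.range k, c n • ξ n⟫_ℂ) atTop (𝓝 ⟪y, Qfun c⟫_ℂ))
    (Wfun : H → H)
    (hW : ∀ f ∈ domW ξ, ∀ y : H,
      Tendsto (fun k : ℕ => ⟪y, ∑ n ∈ Finset.range k, ⟪ξ n, f⟫_ℂ • ξ n⟫_ℂ) atTop
        (𝓝 ⟪y, Wfun f⟫_ℂ)) :
    List.TFAE
      [ ∃ B > (0 : ℝ), ∀ f : H,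
          ∑' n : ℕ, ((‖⟪ξ n, f⟫_ℂ‖₊ : ℝ≥0∞) ^ 2) ≤ ENNReal.ofReal (B * ‖f‖ ^ 2),
        domQ ξ = Set.univ,
        domW ξ = Set.univ ]
    ∧ ((∃ B > (0 : ℝ), ∀ f : H,
          ∑' n : ℕ, ((‖⟪ξ n, f⟫_ℂ‖₊ : ℝ≥0∞) ^ 2) ≤ ENNReal.ofReal (B * ‖f‖ ^ 2)) →
        ((domQ ξ = domD ξ ∧ ∀ c ∈ domQ ξ, Qfun c = Dfun c)
          ∧ (domW ξ = domS ξ ∧ ∀ f ∈ domW ξ, Wfun f = Sfun f))) := by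
  have domains_of_bessel : (∃ B > (0 : ℝ), ∀ f : H,
      ∑' n : ℕ, ((‖⟪ξ n, f⟫_ℂ‖₊ : ℝ≥0∞) ^ 2) ≤ ENNReal.ofReal (B * ‖f‖ ^ 2)) →
      domD ξ = Set.univ ∧ domQ ξ = Set.univ ∧ domS ξ = Set.univ ∧ domW ξ = Set.univ := by
    rintro ⟨B, hB, hξ⟩
    have hfin := sum_norm_inner_sq_le_of_bessel hB.le hξ
    have hD := domD_eq_univ_of_bessel hB.le hfin
    have hS := domS_eq_univ_of_bessel hB.le hfin
    exact ⟨hD, Set.eq_univ_of_univ_subset (hD ▸ domD_subset_domQ ξ), hS,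
      Set.eq_univ_of_univ_subset (hS ▸ domS_subset_domW ξ)⟩
  refine ⟨?_, fun hξ => ?_⟩
  · tfae_have 1 → 2 := fun h => (domains_of_bessel h).2.1
    tfae_have 1 → 3 := fun h => (domains_of_bessel h).2.2.2
    tfae_have 2 → 1 := bessel_of_domQ_eq_univ
    tfae_have 3 → 1 := bessel_of_domW_eq_univ
    tfae_finish
  obtain ⟨hDuniv, hQuniv, hSuniv, hWuniv⟩ := domains_of_bessel hξ
  refine ⟨⟨hQuniv.trans hDuniv.symm, fun c hc => ?_⟩, ⟨hWuniv.trans hSuniv.symm, fun f hf => ?_⟩⟩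
  · exact eq_of_tendsto_inner_of_tendsto (hQ c hc) (hD c (hDuniv ▸ Set.mem_univ c))
  · exact eq_of_tendsto_inner_of_tendsto (hW f hf) (hS f (hSuniv ▸ Set.mem_univ f))
end
end

section
/- Let ξ = (ξ_n)_{n∈ℕ} be a sequence in H such that D(C_ξ) is dense in H, and let f ∈ D(T_ξ). Then f ∈ D(W_ξ) if and only if sup_{k∈ℕ} ∥Σ_{n=1}^k ⟨f,ξ_n⟩ξ_n∥ < ∞. -/
noncomputable section
open scoped InnerProductSpace ComplexInnerProductSpace ComplexConjugate ENNReal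
open Filter Topology

/- `H` is a separable complex Hilbert space. -/
variable {H : Type} [NormedAddCommGroup H] [InnerProductSpace ℂ H] [CompleteSpace H]
  [TopologicalSpace.SeparableSpace H]

/-! A weakly convergent sequence is norm bounded by the uniform boundedness principle.
Conversely, a norm bounded sequence whose inner products with every `g` in the dense set `D(C_ξ)`
converge to `⟪g, h⟫` converges weakly to `h`, since the functionals `y ↦ ⟪y, S k⟫` are
equicontinuous. For `f ∈ D(T_ξ)` the partial sums are such a sequence with `h = T_ξ f`: for
`g ∈ D(C_ξ)` the series `Σ ⟨f,ξ_n⟩⟨ξ_n,g⟩` converges, being the `ℓ²` pairing of `C_ξ f` and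
`C_ξ g`. -/

section WeakConvergence

variable {𝕜 E : Type*} [RCLike 𝕜] [NormedAddCommGroup E] [InnerProductSpace 𝕜 E]

theorem exists_norm_le_of_forall_tendsto_inner [CompleteSpace E] {S : ℕ → E} {φ : E → 𝕜}
    (hS : ∀ y, Tendsto (fun k => ⟪y, S k⟫_𝕜) atTop (𝓝 (φ y))) : ∃ C, ∀ k, ‖S k‖ ≤ C := by
  have hbdd : ∀ y, ∃ C, ∀ k, ‖innerSL 𝕜 (S k) y‖ ≤ C := fun y => by
    obtain ⟨C, hC⟩ := bddAbove_def.mp (hS y).norm.bddAbove_range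
    exact ⟨C, fun k => norm_inner_symm (𝕜 := 𝕜) (S k) y ▸ hC _ ⟨k, rfl⟩⟩
  simpa only [innerSL_apply_norm] using banach_steinhaus hbdd

theorem tendsto_inner_of_dense {ι : Type*} {l : Filter ι} {S : ι → E} {M : ℝ}
    (hS : ∀ i, ‖S i‖ ≤ M) {D : Set E} (hD : Dense D) {h : E}
    (hconv : ∀ g ∈ D, Tendsto (fun i => ⟪g, S i⟫_𝕜) l (𝓝 ⟪g, h⟫_𝕜)) (y : E) :
    Tendsto (fun i => ⟪y, S i⟫_𝕜) l (𝓝 ⟪y, h⟫_𝕜) := by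
  have hequi : Equicontinuous fun i => (innerSLFlip 𝕜 (S i) : E → 𝕜) := by
    have tfae := (NormedSpace.equicontinuous_TFAE fun i => innerSLFlip 𝕜 (S i)).out 1 3
    refine tfae.mpr ⟨M, fun i x => ?_⟩
    calc ‖⟪x, S i⟫_𝕜‖ ≤ ‖x‖ * ‖S i‖ := norm_inner_le_norm x (S i)
      _ ≤ M * ‖x‖ := by rw [mul_comm]; gcongr; exact hS i
  -- By equicontinuity, the set of `y` at which the limit is `⟪y, h⟫` is closed; it contains `D`.
  exact hD.induction hconv
    (hequi.isClosed_setOfPred_tendsto (continuous_id.inner continuous_const)) y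

end WeakConvergence

section DomC

variable {E : Type} [NormedAddCommGroup E] [InnerProductSpace ℂ E]

theorem summable_inner_mul_inner_of_mem_domC {ξ : ℕ → E} {f g : E} (hf : f ∈ domC ξ)
    (hg : g ∈ domC ξ) : Summable fun n => ⟪ξ n, f⟫_ℂ * ⟪g, ξ n⟫_ℂ := by
  refine (lp.summable_inner (⟨_, hg⟩ : l2) ⟨_, hf⟩).congr fun n => ?_
  simp [inner_conj_symm, mul_comm]

theorem tendsto_inner_partialSum_of_mem_domC {ξ : ℕ → E} {f g : E} (hf : f ∈ domC ξ)
    (hg : g ∈ domC ξ) :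
    Tendsto (fun k => ⟪g, ∑ n ∈ Finset.range k, ⟪ξ n, f⟫_ℂ • ξ n⟫_ℂ) atTop
      (𝓝 (∑' n, ⟪ξ n, f⟫_ℂ * ⟪g, ξ n⟫_ℂ)) := by
  simpa only [inner_sum, inner_smul_right] using
    (summable_inner_mul_inner_of_mem_domC hf hg).hasSum.tendsto_sum_nat

end DomC

/-- Let `ξ` be a sequence in `H` with `D(C_ξ)` dense and let `f ∈ D(T_ξ)`.
Then `f ∈ D(W_ξ)` if and only if the partial sums `Σ_{n<k} ⟨f,ξ_n⟩ ξ_n` are norm bounded. -/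
theorem statement10 (ξ : ℕ → H) (hdense : Dense (domC ξ)) (f : H) (hf : f ∈ domT ξ) :
    f ∈ domW ξ ↔ ∃ M : ℝ, ∀ k : ℕ, ‖∑ n ∈ Finset.range k, ⟪ξ n, f⟫_ℂ • ξ n‖ ≤ M := by
  obtain ⟨hfC, h, -, hh⟩ := hf
  constructor
  · rintro ⟨L, hL⟩
    exact exists_norm_le_of_forall_tendsto_inner hL
  · rintro ⟨M, hM⟩
    refine ⟨h, tendsto_inner_of_dense hM hdense fun g hg => ?_⟩
    simpa only [hh g hg] using tendsto_inner_partialSum_of_mem_domC hfC hg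
end
end
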